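/- arXiv:2311.10849 — 6 statements merged into one kernel-verified Lean document; each statement's English description precedes it below -/
import Mathlib

section
/- Let f be a proper convex lower semicontinuous function on ℝ^d. Then ri(dom s_f) = ri(dom f), where s_f is the slope of f; in particular ri(dom s_f) is a convex set. -/
open Filter Topology MeasureTheory Set Metric RealInnerProductSpace
open scoped ENNReal NNReal

noncomputable section

def Proper {d : ℕ} (f : EuclideanSpace ℝ (Fin d) → EReal) : Prop :=
  (∀ x, f x ≠ ⊥) ∧ ∃ x, f x ≠ ⊤

def ConvexFn {d : ℕ} (f : EuclideanSpace ℝ (Fin d) → EReal) : Prop :=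
  Convex ℝ {p : EuclideanSpace ℝ (Fin d) × ℝ | f p.1 ≤ (p.2 : EReal)}

def Subdiff {d : ℕ} (f : EuclideanSpace ℝ (Fin d) → EReal) (x : EuclideanSpace ℝ (Fin d)) :
    Set (EuclideanSpace ℝ (Fin d)) :=
  {v | f x ≠ ⊤ ∧ ∀ y, f x + ((⟪v, y - x⟫ : ℝ) : EReal) ≤ f y}

def slopeFn {d : ℕ} (f : EuclideanSpace ℝ (Fin d) → EReal) (x : EuclideanSpace ℝ (Fin d)) : EReal :=
  sInf ((fun v => (‖v‖ : EReal)) '' Subdiff f x)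

def eLiminf {d : ℕ} (φ : ℕ → EuclideanSpace ℝ (Fin d) → EReal)
    (x : EuclideanSpace ℝ (Fin d)) : EReal :=
  ⨅ (u : ℕ → EuclideanSpace ℝ (Fin d)) (_ : Tendsto u atTop (𝓝 x)),
    Filter.liminf (fun n => φ n (u n)) atTop

def eLimsup {d : ℕ} (φ : ℕ → EuclideanSpace ℝ (Fin d) → EReal)
    (x : EuclideanSpace ℝ (Fin d)) : EReal :=
  ⨅ (u : ℕ → EuclideanSpace ℝ (Fin d)) (_ : Tendsto u atTop (𝓝 x)),
    Filter.limsup (fun n => φ n (u n)) atTop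

def EpiConv {d : ℕ} (φ : ℕ → EuclideanSpace ℝ (Fin d) → EReal)
    (ψ : EuclideanSpace ℝ (Fin d) → EReal) : Prop :=
  ∀ x, eLimsup φ x ≤ ψ x ∧ ψ x ≤ eLiminf φ x

def edom {d : ℕ} (h : EuclideanSpace ℝ (Fin d) → EReal) : Set (EuclideanSpace ℝ (Fin d)) :=
  {x | h x ≠ ⊤}

def rdom {d : ℕ} (h : EuclideanSpace ℝ (Fin d) → EReal) : Set (EuclideanSpace ℝ (Fin d)) :=
  {x | h x ≠ ⊤ ∧ h x ≠ ⊥}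

def domSub {d : ℕ} (f : EuclideanSpace ℝ (Fin d) → EReal) : Set (EuclideanSpace ℝ (Fin d)) :=
  {x | (Subdiff f x).Nonempty}

def erealToENNReal (x : EReal) : ℝ≥0∞ :=
  if x = ⊤ then ⊤ else ENNReal.ofReal x.toReal


/-
Always `dom ∂f ⊆ dom f`. Conversely, at a point `x` of `ri (dom f)`, the restriction of `f` to
the affine hull of `dom f` is a real convex function with `x` in the interior of its domain. In
finite dimension it is continuous there, so its strict epigraph is open, and a hyperplane
separating `(x, f x)` from it cannot be vertical: its slope is a subgradient at `x`. Thus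
`ri (dom f) ⊆ dom ∂f ⊆ dom f`, and a set squeezed between a convex set and its (nonempty)
relative interior has the same affine hull, hence the same relative interior.
-/

section RelativeInterior

variable {E : Type*} [NormedAddCommGroup E] [NormedSpace ℝ E] {s t : Set E} {x : E}

theorem mem_intrinsicInterior_iff_forall_norm_lt :
    x ∈ intrinsicInterior ℝ s ↔ x ∈ s ∧ ∃ δ > 0,
      ∀ w ∈ (affineSpan ℝ s).direction, ‖w‖ < δ → x + w ∈ s := by
  constructor
  · intro hx
    refine ⟨intrinsicInterior_subset hx, ?_⟩
    obtain ⟨y, hy, rfl⟩ := mem_intrinsicInterior.1 hx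
    obtain ⟨δ, hδ, hball⟩ := Metric.mem_nhds_iff.1 (mem_interior_iff_mem_nhds.1 hy)
    refine ⟨δ, hδ, fun w hw hwδ => ?_⟩
    have hmem : (⟨w + y, AffineSubspace.vadd_mem_of_mem_direction hw y.2⟩ : affineSpan ℝ s) ∈
        ball y δ := by
      simpa [Subtype.dist_eq, dist_eq_norm] using hwδ
    simpa [add_comm] using hball hmem
  · rintro ⟨hxs, δ, hδ, hball⟩
    refine mem_intrinsicInterior.2 ⟨⟨x, subset_affineSpan ℝ s hxs⟩, ?_, rfl⟩
    refine mem_interior_iff_mem_nhds.2 (Metric.mem_nhds_iff.2 ⟨δ, hδ, fun z hz => ?_⟩)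
    have hw : (z : E) - x ∈ (affineSpan ℝ s).direction :=
      AffineSubspace.vsub_mem_direction z.2 (subset_affineSpan ℝ s hxs)
    simpa using hball _ hw (by simpa [Subtype.dist_eq, dist_eq_norm] using hz)

theorem exists_pos_forall_add_mem_intrinsicInterior (hx : x ∈ intrinsicInterior ℝ s) :
    ∃ δ > 0, ∀ w ∈ (affineSpan ℝ s).direction, ‖w‖ < δ → x + w ∈ intrinsicInterior ℝ s := by
  obtain ⟨-, δ, hδ, hball⟩ := mem_intrinsicInterior_iff_forall_norm_lt.1 hx
  refine ⟨δ, hδ, fun w hw hwδ => mem_intrinsicInterior_iff_forall_norm_lt.2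
    ⟨hball w hw hwδ, δ - ‖w‖, sub_pos.2 hwδ, fun w' hw' hw'δ => ?_⟩⟩
  rw [add_assoc]
  exact hball _ (add_mem hw hw') ((norm_add_le _ _).trans_lt (by linarith))

protected theorem Convex.intrinsicInterior (hs : Convex ℝ s) :
    Convex ℝ (intrinsicInterior ℝ s) := by
  intro x hx y hy a b ha hb hab
  obtain ⟨hxs, δx, hδx, hballx⟩ := mem_intrinsicInterior_iff_forall_norm_lt.1 hx
  obtain ⟨hys, δy, hδy, hbally⟩ := mem_intrinsicInterior_iff_forall_norm_lt.1 hy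
  refine mem_intrinsicInterior_iff_forall_norm_lt.2
    ⟨hs hxs hys ha hb hab, min δx δy, lt_min hδx hδy, fun w hw hwδ => ?_⟩
  have hsplit : a • x + b • y + w = a • (x + w) + b • (y + w) := by
    rw [smul_add, smul_add, add_add_add_comm, ← add_smul, hab, one_smul]
  rw [hsplit]
  exact hs (hballx w hw (hwδ.trans_le (min_le_left _ _)))
    (hbally w hw (hwδ.trans_le (min_le_right _ _))) ha hb hab

theorem affineSpan_intrinsicInterior (hne : (intrinsicInterior ℝ s).Nonempty) :
    affineSpan ℝ (intrinsicInterior ℝ s) = affineSpan ℝ s := by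
  refine le_antisymm (affineSpan_mono ℝ intrinsicInterior_subset) (affineSpan_le.2 fun y hy => ?_)
  obtain ⟨x, hx⟩ := hne
  obtain ⟨δ, hδ, hball⟩ := exists_pos_forall_add_mem_intrinsicInterior hx
  have hyx : y - x ∈ (affineSpan ℝ s).direction :=
    AffineSubspace.vsub_mem_direction (subset_affineSpan ℝ s hy)
      (subset_affineSpan ℝ s (intrinsicInterior_subset hx))
  obtain ⟨c, hc, hcδ⟩ := exists_pos_mul_lt hδ ‖y - x‖
  have hz := hball _ (Submodule.smul_mem _ c hyx)
    (by rwa [norm_smul, Real.norm_of_nonneg hc.le, mul_comm])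
  have hmem := AffineSubspace.smul_vsub_vadd_mem _ c⁻¹ (subset_affineSpan ℝ _ hz)
    (subset_affineSpan ℝ _ hx) (subset_affineSpan ℝ _ hx)
  rwa [vsub_eq_sub, add_sub_cancel_left, inv_smul_smul₀ hc.ne', vadd_eq_add, sub_add_cancel]
    at hmem

theorem intrinsicInterior_eq_of_subset (hst : s ⊆ t) (hts : intrinsicInterior ℝ t ⊆ s)
    (hne : (intrinsicInterior ℝ t).Nonempty) :
    intrinsicInterior ℝ s = intrinsicInterior ℝ t := by
  have hspan : affineSpan ℝ s = affineSpan ℝ t :=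
    le_antisymm (affineSpan_mono ℝ hst)
      ((affineSpan_intrinsicInterior hne).symm.le.trans (affineSpan_mono ℝ hts))
  ext x
  simp only [mem_intrinsicInterior_iff_forall_norm_lt (s := s), hspan]
  constructor
  · rintro ⟨hxs, δ, hδ, hball⟩
    exact mem_intrinsicInterior_iff_forall_norm_lt.2
      ⟨hst hxs, δ, hδ, fun w hw hwδ => hst (hball w hw hwδ)⟩
  · intro hx
    obtain ⟨δ, hδ, hball⟩ := exists_pos_forall_add_mem_intrinsicInterior hx
    exact ⟨hts hx, δ, hδ, fun w hw hwδ => hts (hball w hw hwδ)⟩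

end RelativeInterior

section Subgradient

variable {E : Type*} [NormedAddCommGroup E] [NormedSpace ℝ E] [FiniteDimensional ℝ E]
  {C : Set E} {g : E → ℝ} {x : E}

theorem ConvexOn.exists_subgradient_of_isOpen (hg : ConvexOn ℝ C g) (hC : IsOpen C)
    (hx : x ∈ C) : ∃ φ : StrongDual ℝ E, ∀ y ∈ C, g x + φ (y - x) ≤ g y := by
  have hopen : IsOpen {p : E × ℝ | p.1 ∈ C ∧ g p.1 < p.2} := by
    have hcont : ContinuousOn (fun p : E × ℝ => g p.1 - p.2) (Prod.fst ⁻¹' C) :=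
      ((hg.continuousOn hC).comp continuousOn_fst (mapsTo_preimage _ _)).sub continuousOn_snd
    convert hcont.isOpen_inter_preimage (hC.preimage continuous_fst) (isOpen_Iio (a := 0))
      using 1
    ext p
    simp [sub_neg]
  obtain ⟨ℓ, hℓ⟩ := geometric_hahn_banach_point_open hg.convex_strict_epigraph hopen
    (x := (x, g x)) fun hmem => lt_irrefl _ hmem.2
  -- `c > 0` says that the separating hyperplane is not vertical.
  set c := ℓ (0, 1)
  have hℓ_apply : ∀ u t, ℓ (u, t) = ℓ (u, 0) + t * c := fun u t => by
    rw [← smul_eq_mul, ← map_smul, ← map_add, Prod.smul_mk, smul_zero, smul_eq_mul, mul_one,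
      Prod.mk_add_mk, add_zero, zero_add]
  have hc : 0 < c := by
    have := hℓ (x, g x + 1) ⟨hx, lt_add_one _⟩
    rw [hℓ_apply x (g x), hℓ_apply x (g x + 1)] at this
    linarith
  refine ⟨-c⁻¹ • ℓ.comp (ContinuousLinearMap.inl ℝ E ℝ), fun y hy => ?_⟩
  refine le_of_forall_gt_imp_ge_of_dense fun t ht => ?_
  have := hℓ (y, t) ⟨hy, ht⟩
  rw [hℓ_apply x, hℓ_apply y] at this
  simp only [smul_apply, ContinuousLinearMap.comp_apply,
    ContinuousLinearMap.inl_apply, smul_eq_mul]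
  rw [← sub_zero (0 : ℝ), ← Prod.mk_sub_mk, map_sub]
  field_simp
  linarith

theorem ConvexOn.exists_subgradient_of_mem_interior (hg : ConvexOn ℝ C g)
    (hx : x ∈ interior C) : ∃ φ : StrongDual ℝ E, ∀ y ∈ C, g x + φ (y - x) ≤ g y := by
  obtain ⟨φ, hφ⟩ :=
    (hg.subset interior_subset hg.1.interior).exists_subgradient_of_isOpen isOpen_interior hx
  -- The inequality at the midpoint of `x` and `y`, which lies in `interior C`, passes to `y` by
  -- convexity.
  refine ⟨φ, fun y hy => ?_⟩
  have hmid := hφ _ (hg.1.combo_interior_self_mem_interior hx hy (a := 1 / 2) (b := 1 / 2)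
    (by norm_num) (by norm_num) (by norm_num))
  have hconv := hg.2 (interior_subset hx) hy (by norm_num : (0 : ℝ) ≤ 1 / 2)
    (by norm_num : (0 : ℝ) ≤ 1 / 2) (by norm_num)
  rw [show (1 / 2 : ℝ) • x + (1 / 2 : ℝ) • y - x = (1 / 2 : ℝ) • (y - x) by module, map_smul,
    smul_eq_mul] at hmid
  rw [smul_eq_mul, smul_eq_mul] at hconv
  linarith

end Subgradient

theorem ConvexOn.exists_subgradient_of_mem_intrinsicInterior {E : Type*}
    [NormedAddCommGroup E] [InnerProductSpace ℝ E] [FiniteDimensional ℝ E] {s : Set E}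
    {g : E → ℝ} (hg : ConvexOn ℝ s g) {x : E} (hx : x ∈ intrinsicInterior ℝ s) :
    ∃ v : E, ∀ y ∈ s, g x + ⟪v, y - x⟫ ≤ g y := by
  set V := (affineSpan ℝ s).direction
  let shift : V →ᵃ[ℝ] E := (AffineEquiv.vaddConst ℝ x).toAffineMap.comp V.subtype.toAffineMap
  have hshift : ∀ w : V, shift w = x + w := fun w => add_comm _ _
  obtain ⟨-, δ, hδ, hball⟩ := mem_intrinsicInterior_iff_forall_norm_lt.1 hx
  have h0 : (0 : V) ∈ interior (shift ⁻¹' s) :=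
    mem_interior_iff_mem_nhds.2 <| Metric.mem_nhds_iff.2 ⟨δ, hδ, fun w hw => by
      simpa [hshift] using hball w w.2 (by simpa using hw)⟩
  obtain ⟨φ, hφ⟩ := (hg.comp_affineMap shift).exists_subgradient_of_mem_interior h0
  refine ⟨(InnerProductSpace.toDual ℝ V).symm φ, fun y hy => ?_⟩
  have hyx : y - x ∈ V := AffineSubspace.vsub_mem_direction (subset_affineSpan ℝ s hy)
    (subset_affineSpan ℝ s (intrinsicInterior_subset hx))
  have := hφ ⟨y - x, hyx⟩ (by simpa [hshift] using hy)
  simpa [hshift, ← InnerProductSpace.toDual_symm_apply, Submodule.coe_inner] using this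

section ExtendedRealValued

variable {d : ℕ} {f : EuclideanSpace ℝ (Fin d) → EReal}

theorem ConvexFn.convexOn_toReal (hprop : Proper f) (hconv : ConvexFn f) :
    ConvexOn ℝ (edom f) (fun x => (f x).toReal) := by
  have hepi : ∀ ⦃x⦄, x ∈ edom f →
      (x, (f x).toReal) ∈ {p : EuclideanSpace ℝ (Fin d) × ℝ | f p.1 ≤ p.2} :=
    fun x hx => (EReal.coe_toReal hx (hprop.1 x)).ge
  have hcombo : ∀ ⦃x⦄, x ∈ edom f → ∀ ⦃y⦄, y ∈ edom f → ∀ ⦃a b : ℝ⦄, 0 ≤ a → 0 ≤ b →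
      a + b = 1 → f (a • x + b • y) ≤ ((a * (f x).toReal + b * (f y).toReal : ℝ) : EReal) :=
    fun x hx y hy a b ha hb hab => by simpa using hconv (hepi hx) (hepi hy) ha hb hab
  refine ⟨fun x hx y hy a b ha hb hab => ?_, fun x hx y hy a b ha hb hab => ?_⟩
  · exact ne_top_of_le_ne_top (EReal.coe_ne_top _) (hcombo hx hy ha hb hab)
  · exact (EReal.toReal_le_toReal (hcombo hx hy ha hb hab) (hprop.1 _)
      (EReal.coe_ne_top _)).trans_eq (EReal.toReal_coe _)

theorem domSub_subset_edom : domSub f ⊆ edom f := fun _ ⟨_, hv⟩ => hv.1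

theorem mem_domSub_of_mem_intrinsicInterior (hprop : Proper f) (hconv : ConvexFn f)
    {x : EuclideanSpace ℝ (Fin d)} (hx : x ∈ intrinsicInterior ℝ (edom f)) : x ∈ domSub f := by
  obtain ⟨v, hv⟩ := (hconv.convexOn_toReal hprop).exists_subgradient_of_mem_intrinsicInterior hx
  have hxdom : x ∈ edom f := intrinsicInterior_subset hx
  refine ⟨v, hxdom, fun y => ?_⟩
  by_cases hy : y ∈ edom f
  · rw [← EReal.coe_toReal hxdom (hprop.1 x), ← EReal.coe_toReal hy (hprop.1 y)]
    exact_mod_cast hv y hy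
  · rw [show f y = ⊤ from not_not.1 hy]
    exact le_top

end ExtendedRealValued

theorem ri_dom_slope_eq_ri_dom_general {d : ℕ} (f : EuclideanSpace ℝ (Fin d) → EReal)
    (hprop : Proper f) (hconv : ConvexFn f) :
    intrinsicInterior ℝ (domSub f) = intrinsicInterior ℝ (edom f) ∧
      Convex ℝ (intrinsicInterior ℝ (domSub f)) := by
  have hcvx := hconv.convexOn_toReal hprop
  have hri := intrinsicInterior_eq_of_subset domSub_subset_edom
    (fun _ hx => mem_domSub_of_mem_intrinsicInterior hprop hconv hx)
    (Set.Nonempty.intrinsicInterior hcvx.1 hprop.2)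
  exact ⟨hri, hri ▸ hcvx.1.intrinsicInterior⟩

theorem ri_dom_slope_eq_ri_dom {d : ℕ} (f : EuclideanSpace ℝ (Fin d) → EReal)
    (hprop : Proper f) (hconv : ConvexFn f) (hlsc : LowerSemicontinuous f) :
    intrinsicInterior ℝ (domSub f) = intrinsicInterior ℝ (edom f) ∧
      Convex ℝ (intrinsicInterior ℝ (domSub f)) :=
  ri_dom_slope_eq_ri_dom_general f hprop hconv
end
end

section
/- Let {f_n} be proper lower semicontinuous convex functions on ℝ^d and {x_n} a sequence converging to x̄ such that {s_{f_n}(x_n)} is bounded. Then the lower epigraphical limit satisfies f_l(x̄) = liminf_n f_n(x_n), and the upper epigraphical limit satisfies f_u(x̄) = limsup_n f_n(x_n). -/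
open Filter Topology MeasureTheory Set Metric RealInnerProductSpace
open scoped ENNReal NNReal

noncomputable section

theorem every_seq_tight {d : ℕ} (f : ℕ → EuclideanSpace ℝ (Fin d) → EReal)
    (hprop : ∀ n, Proper (f n)) (hconv : ∀ n, ConvexFn (f n))
    (hlsc : ∀ n, LowerSemicontinuous (f n))
    (x : ℕ → EuclideanSpace ℝ (Fin d)) (xbar : EuclideanSpace ℝ (Fin d))
    (hbdd : ∃ M : ℝ, ∀ n, slopeFn (f n) (x n) ≤ (M : EReal))
    (hconvseq : Filter.Tendsto x atTop (𝓝 xbar)) :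
    eLiminf f xbar = Filter.liminf (fun n => f n (x n)) atTop ∧
      eLimsup f xbar = Filter.limsup (fun n => f n (x n)) atTop := by
  obtain ⟨M, hM⟩ := hbdd
  -- choose bounded subgradients
  have hv : ∀ n, ∃ v ∈ Subdiff (f n) (x n), ‖v‖ ≤ M + 1 := by
    intro n
    have h1 : slopeFn (f n) (x n) < ((M + 1 : ℝ) : EReal) := by
      refine (hM n).trans_lt ?_
      exact_mod_cast (lt_add_one M)
    rw [slopeFn, sInf_lt_iff] at h1
    obtain ⟨e, he, hlt⟩ := h1
    obtain ⟨v, hv, rfl⟩ := he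
    have hlt' : (‖v‖ : EReal) < ((M + 1 : ℝ) : EReal) := hlt
    exact ⟨v, hv, le_of_lt (by exact_mod_cast hlt')⟩
  choose v hvmem hvnorm using hv
  -- main estimate: for any sequence u → xbar
  have key : ∀ (u : ℕ → EuclideanSpace ℝ (Fin d)), Tendsto u atTop (𝓝 xbar) →
      (∀ n, f n (x n) + ((⟪v n, u n - x n⟫ : ℝ) : EReal) ≤ f n (u n)) ∧
        Tendsto (fun n => (⟪v n, u n - x n⟫ : ℝ)) atTop (𝓝 0) := by
    intro u hu
    constructor
    · intro n
      exact (hvmem n).2 (u n)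
    · have hd : Tendsto (fun n => ‖u n - x n‖) atTop (𝓝 0) := by
        have := (hu.sub hconvseq)
        rw [sub_self] at this
        simpa using this.norm
      refine squeeze_zero_norm (a := fun n => (M + 1) * ‖u n - x n‖) (fun n => ?_) ?_
      · calc ‖(⟪v n, u n - x n⟫ : ℝ)‖ ≤ ‖v n‖ * ‖u n - x n‖ := norm_inner_le_norm _ _
          _ ≤ (M + 1) * ‖u n - x n‖ :=
            mul_le_mul_of_nonneg_right (hvnorm n) (norm_nonneg _)
      · simpa using hd.const_mul (M + 1)
  have keyliminf : ∀ (u : ℕ → EuclideanSpace ℝ (Fin d)), Tendsto u atTop (𝓝 xbar) →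
      Filter.liminf (fun n => f n (x n)) atTop ≤ Filter.liminf (fun n => f n (u n)) atTop := by
    intro u hu
    obtain ⟨hineq, hc⟩ := key u hu
    have hc0 : Filter.liminf (fun n => ((⟪v n, u n - x n⟫ : ℝ) : EReal)) atTop = 0 := by
      have : Tendsto (fun n => ((⟪v n, u n - x n⟫ : ℝ) : EReal)) atTop (𝓝 (0 : EReal)) := by
        have h2 := EReal.tendsto_coe.2 hc
        rw [EReal.coe_zero] at h2
        exact h2
      exact this.liminf_eq
    calc Filter.liminf (fun n => f n (x n)) atTop
        = Filter.liminf (fun n => f n (x n)) atTop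
          + Filter.liminf (fun n => ((⟪v n, u n - x n⟫ : ℝ) : EReal)) atTop := by
          rw [hc0, add_zero]
      _ ≤ Filter.liminf ((fun n => f n (x n))
            + fun n => ((⟪v n, u n - x n⟫ : ℝ) : EReal)) atTop := EReal.le_liminf_add
      _ ≤ Filter.liminf (fun n => f n (u n)) atTop :=
          Filter.liminf_le_liminf (Filter.Eventually.of_forall hineq)
  have keylimsup : ∀ (u : ℕ → EuclideanSpace ℝ (Fin d)), Tendsto u atTop (𝓝 xbar) →
      Filter.limsup (fun n => f n (x n)) atTop ≤ Filter.limsup (fun n => f n (u n)) atTop := by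
    intro u hu
    obtain ⟨hineq, hc⟩ := key u hu
    have hc0 : Filter.liminf (fun n => ((⟪v n, u n - x n⟫ : ℝ) : EReal)) atTop = 0 := by
      have : Tendsto (fun n => ((⟪v n, u n - x n⟫ : ℝ) : EReal)) atTop (𝓝 (0 : EReal)) := by
        have h2 := EReal.tendsto_coe.2 hc
        rw [EReal.coe_zero] at h2
        exact h2
      exact this.liminf_eq
    calc Filter.limsup (fun n => f n (x n)) atTop
        = Filter.limsup (fun n => f n (x n)) atTop
          + Filter.liminf (fun n => ((⟪v n, u n - x n⟫ : ℝ) : EReal)) atTop := by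
          rw [hc0, add_zero]
      _ ≤ Filter.limsup ((fun n => f n (x n))
            + fun n => ((⟪v n, u n - x n⟫ : ℝ) : EReal)) atTop := EReal.le_limsup_add
      _ ≤ Filter.limsup (fun n => f n (u n)) atTop :=
          Filter.limsup_le_limsup (Filter.Eventually.of_forall hineq)
  constructor
  · refine le_antisymm (iInf₂_le x hconvseq) ?_
    exact le_iInf₂ fun u hu => keyliminf u hu
  · refine le_antisymm (iInf₂_le x hconvseq) ?_
    exact le_iInf₂ fun u hu => keylimsup u hu
end
end

section
/- Let g : ℝ^d → ℝ ∪ {+∞} be proper convex lower semicontinuous and γ : [0,+∞) → ℝ^d an absolutely continuous curve such that liminf_{t→∞} s_g(γ(t)) = 0 and ∫₀^∞ s_g(γ(t)) ‖γ̇(t)‖ dt < +∞. Then liminf_{t→∞} g(γ(t)) = inf g. -/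
open Filter Topology MeasureTheory Set Metric RealInnerProductSpace
open scoped ENNReal NNReal

noncomputable section

/-!
If `liminf g(γ t) > inf g`, pick `y` and reals `a < b` with `g y ≤ a` and `g(γ t) > b` for large `t`.
Testing a subgradient `v` at `γ t` against `y` gives `‖v‖ ‖γ t - y‖ ≥ b - a`, so the slope at `γ t`
is at least `(b - a) / ‖γ t - y‖`. As the slope has liminf `0`, the distance `‖γ t - y‖` is
unbounded. Hence from any time `s` there is a later `t` with `‖γ t - y‖ > 2 ‖γ s - y‖`; let `u` be
the point of `[s, t]` farthest from `y`, at distance `M`. On `[s, u]` the curve stays within `M`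
of `y` and travels at least `M - ‖γ s - y‖ ≥ M / 2`, which costs at least `(b - a) / 2` of the
integral `∫ s_g(γ) ‖γ'‖`. Infinitely many such disjoint pieces make the integral infinite.
-/

lemma ofReal_le_erealToENNReal {x : EReal} {c : ℝ} (h : (c : EReal) ≤ x) :
    ENNReal.ofReal c ≤ erealToENNReal x := by
  unfold erealToENNReal
  split_ifs with hx
  · exact le_top
  · have hxb : x ≠ ⊥ := ne_bot_of_le_ne_bot (EReal.coe_ne_bot c) h
    exact ENNReal.ofReal_le_ofReal (EReal.coe_le_coe_iff.mp (by rwa [EReal.coe_toReal hx hxb]))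

lemma sub_div_le_slopeFn {d : ℕ} {f : EuclideanSpace ℝ (Fin d) → EReal}
    {x y : EuclideanSpace ℝ (Fin d)} {a b M : ℝ} (hy : f y ≤ a) (hx : (b : EReal) < f x)
    (hM : 0 < M) (hxy : ‖x - y‖ ≤ M) :
    (((b - a) / M : ℝ) : EReal) ≤ slopeFn f x := by
  refine le_sInf ?_
  rintro _ ⟨v, ⟨hx_ne_top, hv⟩, rfl⟩
  obtain ⟨c, hc⟩ : ∃ c : ℝ, f x = c :=
    ⟨(f x).toReal, (EReal.coe_toReal hx_ne_top (ne_bot_of_gt hx)).symm⟩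
  rw [hc] at hx hv
  have hvy : c + ⟪v, y - x⟫ ≤ a := by exact_mod_cast (hv y).trans hy
  have hbc : b < c := by exact_mod_cast hx
  have hcs : -⟪v, y - x⟫ ≤ ‖v‖ * ‖x - y‖ := by
    rw [← inner_neg_right, neg_sub]
    exact real_inner_le_norm v (x - y)
  have hvM : ‖v‖ * ‖x - y‖ ≤ ‖v‖ * M := mul_le_mul_of_nonneg_left hxy (norm_nonneg v)
  exact EReal.coe_le_coe_iff.mpr ((div_le_iff₀ hM).mpr (by linarith))

lemma frequently_lt_of_liminf_le_zero {φ : ℝ → EReal} {r : ℝ → ℝ} {ε : ℝ} (hε : 0 < ε)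
    (hφ : liminf φ atTop ≤ 0)
    (hw : ∀ᶠ t in atTop, ∀ M, 0 < M → r t ≤ M → ((ε / M : ℝ) : EReal) ≤ φ t) (R : ℝ) :
    ∃ᶠ t in atTop, R < r t := by
  by_contra hbdd
  simp only [not_frequently, not_lt] at hbdd
  have hM : 0 < max R 1 := lt_max_of_lt_right one_pos
  have hle : ((ε / max R 1 : ℝ) : EReal) ≤ liminf φ atTop :=
    le_liminf_of_le (by isBoundedDefault) <| (hw.and hbdd).mono
      fun t ⟨hwt, hrt⟩ => hwt _ hM (hrt.trans (le_max_left R 1))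
  have hpos : ((0 : ℝ) : EReal) < ((ε / max R 1 : ℝ) : EReal) :=
    EReal.coe_lt_coe_iff.mpr (div_pos hε hM)
  exact (hpos.trans_le (hle.trans hφ)).false

lemma lintegral_Ioi_eq_top_of_forall_exists {μ : Measure ℝ} {f : ℝ → ℝ≥0∞} {T : ℝ}
    {δ : ℝ≥0∞} (hδ : δ ≠ 0) (h : ∀ s, T ≤ s → ∃ u, s ≤ u ∧ δ ≤ ∫⁻ t in Ioc s u, f t ∂μ) :
    ∫⁻ t in Ioi T, f t ∂μ = ⊤ := by
  have hsum : ∀ n : ℕ, ∃ s, T ≤ s ∧ n * δ ≤ ∫⁻ t in Ioc T s, f t ∂μ := by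
    intro n
    induction n with
    | zero => exact ⟨T, le_rfl, by simp⟩
    | succ n ih =>
      obtain ⟨s, hTs, hs⟩ := ih
      obtain ⟨u, hsu, hu⟩ := h s hTs
      refine ⟨u, hTs.trans hsu, ?_⟩
      rw [← Ioc_union_Ioc_eq_Ioc hTs hsu,
        lintegral_union measurableSet_Ioc (Ioc_disjoint_Ioc_of_le le_rfl)]
      push_cast
      rw [add_mul, one_mul]
      exact add_le_add hs hu
  by_contra hfin
  obtain ⟨n, hn⟩ := ENNReal.exists_nat_mul_gt hδ hfin
  obtain ⟨s, -, hs⟩ := hsum n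
  exact (hn.trans_le (hs.trans (lintegral_mono_set Ioc_subset_Ioi_self))).false

section Primitive

variable {E : Type*} [NormedAddCommGroup E] [NormedSpace ℝ E]

def IsPrimitiveOnIci (γ γ' : ℝ → E) : Prop :=
  ∀ t : ℝ, 0 ≤ t → IntegrableOn γ' (Ioc 0 t) volume ∧ γ t = γ 0 + ∫ s in Ioc 0 t, γ' s

variable {γ γ' : ℝ → E}

lemma IsPrimitiveOnIci.continuousOn_Icc (hγ : IsPrimitiveOnIci γ γ') {t : ℝ} (ht : 0 ≤ t) :
    ContinuousOn γ (Icc 0 t) := by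
  have hint : IntegrableOn γ' (Icc 0 t) volume :=
    (integrableOn_Icc_iff_integrableOn_Ioc).mpr (hγ t ht).1
  exact (continuousOn_const.add (intervalIntegral.continuousOn_primitive hint)).congr
    fun s hs => (hγ s hs.1).2

lemma IsPrimitiveOnIci.sub_eq_setIntegral (hγ : IsPrimitiveOnIci γ γ') {s t : ℝ}
    (hs : 0 ≤ s) (hst : s ≤ t) : γ t - γ s = ∫ u in Ioc s t, γ' u := by
  have hint : IntegrableOn γ' (Ioc s t) volume :=
    (hγ t (hs.trans hst)).1.mono_set (Ioc_subset_Ioc_left hs)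
  rw [(hγ t (hs.trans hst)).2, (hγ s hs).2, ← Ioc_union_Ioc_eq_Ioc hs hst,
    setIntegral_union (Ioc_disjoint_Ioc_of_le le_rfl) measurableSet_Ioc (hγ s hs).1 hint]
  abel

lemma IsPrimitiveOnIci.enorm_sub_le (hγ : IsPrimitiveOnIci γ γ') {s t : ℝ}
    (hs : 0 ≤ s) (hst : s ≤ t) : ‖γ t - γ s‖ₑ ≤ ∫⁻ u in Ioc s t, ‖γ' u‖ₑ := by
  rw [hγ.sub_eq_setIntegral hs hst]
  exact enorm_integral_le_lintegral_enorm _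

lemma IsPrimitiveOnIci.exists_half_le_lintegral (hγ : IsPrimitiveOnIci γ γ') {φ : ℝ → EReal}
    {y : E} {ε s t : ℝ} (hε : 0 < ε) (hs : 0 ≤ s) (hst : s ≤ t)
    (hfar : 2 * ‖γ s - y‖ < ‖γ t - y‖)
    (hw : ∀ u ∈ Icc s t, ∀ M, 0 < M → ‖γ u - y‖ ≤ M → ((ε / M : ℝ) : EReal) ≤ φ u) :
    ∃ u, s ≤ u ∧ ENNReal.ofReal (ε / 2) ≤ ∫⁻ v in Ioc s u, erealToENNReal (φ v) * ‖γ' v‖ₑ := by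
  set r : ℝ → ℝ := fun u => ‖γ u - y‖
  have hr : ContinuousOn r (Icc s t) :=
    (((hγ.continuousOn_Icc (hs.trans hst)).mono (Icc_subset_Icc_left hs)).sub
      continuousOn_const).norm
  obtain ⟨u, ⟨hsu, hut⟩, hmax⟩ := isCompact_Icc.exists_isMaxOn (nonempty_Icc.mpr hst) hr
  have hfar_u : 2 * r s < r u := hfar.trans_le (hmax (right_mem_Icc.mpr hst))
  have hM : 0 < r u := lt_of_le_of_lt (by positivity) hfar_u
  have htravel : ENNReal.ofReal (r u - r s) ≤ ∫⁻ v in Ioc s u, ‖γ' v‖ₑ := by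
    refine le_trans ?_ (hγ.enorm_sub_le hs hsu)
    rw [← ofReal_norm]
    exact ENNReal.ofReal_le_ofReal (by simpa [r] using norm_sub_norm_le (γ u - y) (γ s - y))
  refine ⟨u, hsu, ?_⟩
  calc ENNReal.ofReal (ε / 2)
      ≤ ENNReal.ofReal (ε / r u) * ENNReal.ofReal (r u - r s) := by
        rw [← ENNReal.ofReal_mul (by positivity)]
        refine ENNReal.ofReal_le_ofReal ?_
        rw [div_mul_eq_mul_div, le_div_iff₀ hM]
        nlinarith
    _ ≤ ENNReal.ofReal (ε / r u) * ∫⁻ v in Ioc s u, ‖γ' v‖ₑ := by gcongr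
    _ = ∫⁻ v in Ioc s u, ENNReal.ofReal (ε / r u) * ‖γ' v‖ₑ :=
        (lintegral_const_mul' _ _ ENNReal.ofReal_ne_top).symm
    _ ≤ ∫⁻ v in Ioc s u, erealToENNReal (φ v) * ‖γ' v‖ₑ := by
        refine setLIntegral_mono' measurableSet_Ioc fun v hv => ?_
        have hvI : v ∈ Icc s t := ⟨hv.1.le, hv.2.trans hut⟩
        gcongr
        exact ofReal_le_erealToENNReal (hw v hvI _ hM (hmax hvI))

end Primitive

theorem infimizing_by_slope_integrability_general {d : ℕ} (g : EuclideanSpace ℝ (Fin d) → EReal)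
    (γ γ' : ℝ → EuclideanSpace ℝ (Fin d))
    (hAC : ∀ t : ℝ, 0 ≤ t → IntegrableOn γ' (Ioc 0 t) volume ∧
      γ t = γ 0 + ∫ s in Ioc 0 t, γ' s)
    (hslope0 : Filter.liminf (fun t => slopeFn g (γ t)) atTop = 0)
    (hint : ∫⁻ t in Ioi (0:ℝ), erealToENNReal (slopeFn g (γ t)) * ‖γ' t‖₊ < ⊤) :
    Filter.liminf (fun t => g (γ t)) atTop = ⨅ x, g x := by
  by_contra hne
  have hlt : ⨅ x, g x < liminf (fun t => g (γ t)) atTop :=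
    (le_liminf_of_le (by isBoundedDefault) (.of_forall fun t => iInf_le g (γ t))).lt_of_ne
      (Ne.symm hne)
  obtain ⟨y, hy⟩ := iInf_lt_iff.mp hlt
  obtain ⟨a, hya, haL⟩ := EReal.lt_iff_exists_real_btwn.mp hy
  obtain ⟨b, hab, hbL⟩ := EReal.lt_iff_exists_real_btwn.mp haL
  obtain ⟨T, hT⟩ := eventually_atTop.mp
    ((eventually_lt_of_lt_liminf hbL).and (eventually_ge_atTop (0 : ℝ)))
  have hε : 0 < b - a := sub_pos.mpr (EReal.coe_lt_coe_iff.mp hab)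
  have hw : ∀ t, T ≤ t → ∀ M, 0 < M → ‖γ t - y‖ ≤ M →
      (((b - a) / M : ℝ) : EReal) ≤ slopeFn g (γ t) :=
    fun t ht M hM => sub_div_le_slopeFn hya.le (hT t ht).1 hM
  have hunbdd := frequently_lt_of_liminf_le_zero hε hslope0.le
    (eventually_atTop.mpr ⟨T, hw⟩) (r := fun t => ‖γ t - y‖)
  refine hint.ne (eq_top_mono (lintegral_mono_set (Ioi_subset_Ioi (hT T le_rfl).2))
    (lintegral_Ioi_eq_top_of_forall_exists (ENNReal.ofReal_pos.mpr (half_pos hε)).ne' fun s hs => ?_))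
  obtain ⟨t, hfar, hst⟩ := ((hunbdd (2 * ‖γ s - y‖)).and_eventually (eventually_ge_atTop s)).exists
  exact IsPrimitiveOnIci.exists_half_le_lintegral hAC hε (hT s hs).2 hst hfar
    fun u hu => hw u (hs.trans hu.1)

theorem infimizing_by_slope_integrability {d : ℕ} (g : EuclideanSpace ℝ (Fin d) → EReal)
    (hprop : Proper g) (hconv : ConvexFn g) (hlsc : LowerSemicontinuous g)
    (γ γ' : ℝ → EuclideanSpace ℝ (Fin d))
    (hAC : ∀ t : ℝ, 0 ≤ t → IntegrableOn γ' (Ioc 0 t) volume ∧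
      γ t = γ 0 + ∫ s in Ioc 0 t, γ' s)
    (hslope0 : Filter.liminf (fun t => slopeFn g (γ t)) atTop = 0)
    (hint : ∫⁻ t in Ioi (0:ℝ), erealToENNReal (slopeFn g (γ t)) * ‖γ' t‖₊ < ⊤) :
    Filter.liminf (fun t => g (γ t)) atTop = ⨅ x, g x :=
  infimizing_by_slope_integrability_general g γ γ' hAC hslope0 hint
end
end

section
/- Comparison principle: Let f, g : ℝ^d → ℝ ∪ {+∞} be convex lower semicontinuous functions bounded from below. If inf f ≥ inf g and s_f(x) ≥ s_g(x) for every x ∈ ℝ^d, then f ≥ g. -/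
open Filter Topology MeasureTheory Set Metric RealInnerProductSpace
open scoped ENNReal NNReal

noncomputable section

/-!
Run the proximal point method `x_{k+1} = argmin (f + c ‖· - x_k‖²)` from `x₀`. Each step lowers
`f` by at least `2c ‖x_{k+1} - x_k‖²`, the steps are nonincreasing (monotonicity of `∂f`), and
`2c (x_k - x_{k+1}) ∈ ∂f(x_{k+1})`, so `g` has subgradients of norm about `2c ‖x_{k+1} - x_k‖`
at `x_{k+1}`. Chaining the subgradient inequalities of `g` along `x_1, …, x_{N+1}` and then to a
near-minimiser `y` of `g` gives `g(x_1) ≤ g(y) + f(x_0) - f(x_N)` up to the error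
`2c ‖x_{N+1} - x_N‖ · dist(x_{N+1}, y)`; as the steps are square-summable, an Abel–Dini argument
makes this error small for some `N`. Since `g(y) ≈ inf g ≤ inf f ≤ f(x_N)`, this gives
`g(x_1) ≤ f(x_0)`. Letting `c → ∞` sends `x_1 → x_0`, and lower semicontinuity of `g` yields
`g(x_0) ≤ f(x_0)`.
-/

theorem exists_mul_add_sum_lt_of_sum_sq_le {a : ℕ → ℝ} (ha : ∀ n, 0 ≤ a n) {K : ℝ}
    (hK : ∀ N, ∑ k ∈ Finset.range N, a k ^ 2 ≤ K) (C : ℝ) {θ : ℝ} (hθ : 0 < θ) :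
    ∃ N, a N * (C + ∑ k ∈ Finset.range N, a k) < θ := by
  by_contra! h
  set T : ℕ → ℝ := fun N => C + ∑ k ∈ Finset.range N, a k
  have hT : ∀ N, 0 < T N := fun N => pos_of_mul_pos_right (hθ.trans_le (h N)) (ha N)
  -- `T` grows at most by the factor `exp (a N ^ 2 / θ)` per step, so it stays bounded; then `a`
  -- stays away from `0`, contradicting the summability of `a ^ 2`.
  have hstep : ∀ N, T (N + 1) ≤ T N * Real.exp (a N ^ 2 / θ) := by
    intro N
    have hratio : a N / T N ≤ a N ^ 2 / θ := by
      rw [div_le_div_iff₀ (hT N) hθ]; nlinarith [h N, ha N]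
    calc T (N + 1) = T N * (a N / T N + 1) := by
          rw [mul_add, mul_div_cancel₀ _ (hT N).ne', mul_one]
          simp only [T, Finset.sum_range_succ]
          ring
      _ ≤ T N * Real.exp (a N ^ 2 / θ) := mul_le_mul_of_nonneg_left
          ((Real.add_one_le_exp _).trans (Real.exp_le_exp.2 hratio)) (hT N).le
  have hgrowth : ∀ N, T N ≤ T 0 * Real.exp ((∑ k ∈ Finset.range N, a k ^ 2) / θ) := by
    intro N
    induction N with
    | zero => simp
    | succ N ih =>
      calc T (N + 1) ≤ T N * Real.exp (a N ^ 2 / θ) := hstep N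
        _ ≤ T 0 * Real.exp ((∑ k ∈ Finset.range N, a k ^ 2) / θ) * Real.exp (a N ^ 2 / θ) := by
            gcongr
        _ = _ := by rw [mul_assoc, ← Real.exp_add, Finset.sum_range_succ, add_div]
  set B := T 0 * Real.exp (K / θ)
  have hB : 0 < B := mul_pos (hT 0) (Real.exp_pos _)
  have hlow : ∀ N, (θ / B) ^ 2 ≤ a N ^ 2 := by
    intro N
    have hTB : T N ≤ B := (hgrowth N).trans <| mul_le_mul_of_nonneg_left
      (Real.exp_le_exp.2 (div_le_div_of_nonneg_right (hK N) hθ.le)) (hT 0).le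
    have : θ / B ≤ a N :=
      calc θ / B ≤ θ / T N := div_le_div_of_nonneg_left hθ.le (hT N) hTB
        _ ≤ a N := (div_le_iff₀ (hT N)).2 (h N)
    gcongr
  have hlim := (summable_of_sum_range_le (fun k => sq_nonneg (a k)) hK).tendsto_atTop_zero
  obtain ⟨N, hN⟩ := (hlim.eventually (gt_mem_nhds (by positivity : 0 < (θ / B) ^ 2))).exists
  exact (hlow N).not_gt hN

theorem EReal.coe_toReal_of_coe_le {m : ℝ} {a : EReal} (hm : (m : EReal) ≤ a) (ha : a ≠ ⊤) :
    ((a.toReal : ℝ) : EReal) = a :=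
  EReal.coe_toReal ha (ne_bot_of_le_ne_bot (EReal.coe_ne_bot m) hm)

theorem exists_forall_le_add_of_iInf_le {α : Type*} {u v : α → EReal}
    (huv : ⨅ a, u a ≤ ⨅ a, v a) (hbot : ⨅ a, v a ≠ ⊥) (htop : ⨅ a, v a ≠ ⊤) {ε : ℝ} (hε : 0 < ε) :
    ∃ a, ∀ b, u a ≤ v b + ε := by
  have hlt : ⨅ a, v a < (⨅ a, v a) + ε := by
    rw [← EReal.coe_toReal htop hbot, ← EReal.coe_add, EReal.coe_lt_coe_iff]
    exact lt_add_of_pos_right _ hε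
  obtain ⟨a, ha⟩ := iInf_lt_iff.1 (huv.trans_lt hlt)
  exact ⟨a, fun b => ha.le.trans (by gcongr; exact iInf_le _ _)⟩

section ConvexAnalysis

variable {d : ℕ} {f g : EuclideanSpace ℝ (Fin d) → EReal} {c m : ℝ}

local notation "E" => EuclideanSpace ℝ (Fin d)

theorem ConvexFn.apply_smul_add_smul_le (hcf : ConvexFn f) {a b : E} {fa fb : ℝ}
    (ha : f a ≤ fa) (hb : f b ≤ fb) {t : ℝ} (ht₀ : 0 ≤ t) (ht₁ : t ≤ 1) :
    f (t • a + (1 - t) • b) ≤ ((t * fa + (1 - t) * fb : ℝ) : EReal) := by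
  simpa using hcf (x := (a, fa)) (y := (b, fb)) ha hb ht₀ (sub_nonneg.2 ht₁) (by ring)

theorem slopeFn_le_norm {z v : E} (hv : v ∈ Subdiff f z) :
    slopeFn f z ≤ ‖v‖ :=
  sInf_le ⟨v, hv, rfl⟩

theorem exists_mem_subdiff_norm_lt {z : E} {r : ℝ} (h : slopeFn f z < r) :
    ∃ v ∈ Subdiff f z, ‖v‖ < r := by
  obtain ⟨_, ⟨v, hv, rfl⟩, hlt⟩ := sInf_lt_iff.1 h
  exact ⟨v, hv, EReal.coe_lt_coe_iff.1 hlt⟩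

theorem le_add_norm_mul_dist_of_mem_subdiff {z v : E} (hv : v ∈ Subdiff f z)
    (y : E) : f z ≤ f y + ((‖v‖ * dist z y : ℝ) : EReal) := by
  have hinner : -(‖v‖ * dist z y) ≤ ⟪v, y - z⟫ := by
    rw [dist_comm, dist_eq_norm]
    exact neg_le_of_abs_le (abs_real_inner_le_norm v (y - z))
  rw [← EReal.sub_le_iff_le_add (.inl (EReal.coe_ne_bot _)) (.inl (EReal.coe_ne_top _)),
    sub_eq_add_neg, ← EReal.coe_neg]
  calc f z + ((-(‖v‖ * dist z y) : ℝ) : EReal) ≤ f z + ((⟪v, y - z⟫ : ℝ) : EReal) := by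
        gcongr
    _ ≤ f y := hv.2 y

theorem le_add_sum_of_mem_subdiff {z w : ℕ → E}
    (hw : ∀ k, w k ∈ Subdiff f (z k)) (y : E) (N : ℕ) :
    f (z 0) ≤ f y + ((∑ k ∈ Finset.range N, ‖w k‖ * dist (z k) (z (k + 1))
      + ‖w N‖ * dist (z N) y : ℝ) : EReal) := by
  have hpath : ∀ n, f (z 0) ≤ f (z n)
      + ((∑ k ∈ Finset.range n, ‖w k‖ * dist (z k) (z (k + 1)) : ℝ) : EReal) := by
    intro n
    induction n with
    | zero => simp
    | succ n ih =>
      rw [Finset.sum_range_succ, add_comm _ (‖w n‖ * _), EReal.coe_add, ← add_assoc]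
      exact ih.trans (by gcongr; exact le_add_norm_mul_dist_of_mem_subdiff (hw n) _)
  rw [add_comm _ (‖w N‖ * _), EReal.coe_add, ← add_assoc]
  exact (hpath N).trans (by gcongr; exact le_add_norm_mul_dist_of_mem_subdiff (hw N) _)

theorem inner_sub_nonneg_of_mem_subdiff (hf : ∀ x, f x ≠ ⊥) {a b va vb : E}
    (hva : va ∈ Subdiff f a) (hvb : vb ∈ Subdiff f b) : 0 ≤ ⟪vb - va, b - a⟫ := by
  have hab := hva.2 b
  have hba := hvb.2 a
  rw [← EReal.coe_toReal hva.1 (hf a), ← EReal.coe_toReal hvb.1 (hf b), ← EReal.coe_add,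
    EReal.coe_le_coe_iff] at hab hba
  have : ⟪vb, a - b⟫ = -⟪vb, b - a⟫ := by rw [← inner_neg_right, neg_sub]
  rw [inner_sub_left]
  linarith

def IsProxPoint (f : E → EReal) (c : ℝ) (x p : E) : Prop :=
  ∀ y, f p + ((c * dist p x ^ 2 : ℝ) : EReal) ≤ f y + ((c * dist y x ^ 2 : ℝ) : EReal)

theorem exists_isProxPoint (hlf : LowerSemicontinuous f) (hm : ∀ y, (m : EReal) ≤ f y)
    (hc : 0 < c) (x : E) : ∃ p, IsProxPoint f c x p := by
  by_cases htop : ∀ y, f y = ⊤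
  · exact ⟨x, fun y => by simp only [htop, EReal.top_add_coe, le_refl]⟩
  push Not at htop
  obtain ⟨z, hz⟩ := htop
  set φ : E → EReal := fun y => f y + ((c * dist y x ^ 2 : ℝ) : EReal)
  have hφ : LowerSemicontinuous φ :=
    hlf.add' (continuous_coe_real_ereal.comp (by fun_prop)).lowerSemicontinuous
      fun y => EReal.continuousAt_add (.inr (EReal.coe_ne_bot _)) (.inr (EReal.coe_ne_top _))
  set A := (f z).toReal + c * dist z x ^ 2
  have hφz : φ z = A := by
    simp only [φ, A, EReal.coe_add, EReal.coe_toReal_of_coe_le (hm z) hz]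
  have hbdd : {y | φ y ≤ φ z} ⊆ closedBall x √((A - m) / c) := by
    intro y hy
    have : m + c * dist y x ^ 2 ≤ A := by
      rw [← EReal.coe_le_coe_iff, ← hφz, EReal.coe_add]
      exact (add_le_add_left (hm y) _).trans hy
    rw [mem_closedBall, ← abs_dist]
    exact Real.abs_le_sqrt ((le_div_iff₀' hc).2 (by linarith))
  have hcpt : IsCompact {y | φ y ≤ φ z} :=
    isCompact_of_isClosed_isBounded (hφ.isClosed_preimage _) (isBounded_closedBall.subset hbdd)
  have hzS : z ∈ {y | φ y ≤ φ z} := le_refl (φ z)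
  obtain ⟨p, -, hp⟩ := (hφ.lowerSemicontinuousOn _).exists_isMinOn ⟨z, hzS⟩ hcpt
  refine ⟨p, fun y => ?_⟩
  by_cases hy : φ y ≤ φ z
  · exact hp hy
  · exact (hp hzS).trans (not_le.1 hy).le

variable {x p : EuclideanSpace ℝ (Fin d)}

theorem IsProxPoint.ne_top (hp : IsProxPoint f c x p) (hx : f x ≠ ⊤) : f p ≠ ⊤ := by
  intro hfp
  have := hp x
  rw [hfp, EReal.top_add_coe, dist_self] at this
  simp [top_le_iff, hx] at this

theorem IsProxPoint.smul_sub_mem_subdiff (hcf : ConvexFn f) (hf : ∀ y, f y ≠ ⊥)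
    (hp : IsProxPoint f c x p) (hx : f x ≠ ⊤) : (2 * c) • (x - p) ∈ Subdiff f p := by
  have hpt := hp.ne_top hx
  refine ⟨hpt, fun y => ?_⟩
  by_cases hyt : f y = ⊤
  · simp [hyt]
  have hFp := EReal.coe_toReal hpt (hf p)
  have hFy := EReal.coe_toReal hyt (hf y)
  set Fp := (f p).toReal
  set Fy := (f y).toReal
  rw [← hFp, ← hFy]
  -- minimality of `p` against the points `t • y + (1 - t) • p`, then `t → 0⁺`
  have hseg : ∀ t ∈ Ioc (0 : ℝ) 1,
      Fp + 2 * c * ⟪x - p, y - p⟫ ≤ Fy + t * (c * ‖y - p‖ ^ 2) := by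
    rintro t ⟨ht₀, ht₁⟩
    have hconv := hcf.apply_smul_add_smul_le hFy.ge hFp.ge ht₀.le ht₁
    have hmin := (hp (t • y + (1 - t) • p)).trans (add_le_add_left hconv _)
    rw [← hFp] at hmin
    have hexp : dist (t • y + (1 - t) • p) x ^ 2
        = ‖p - x‖ ^ 2 + 2 * t * ⟪p - x, y - p⟫ + t ^ 2 * ‖y - p‖ ^ 2 := by
      rw [dist_eq_norm, show t • y + (1 - t) • p - x = (p - x) + t • (y - p) by module,
        norm_add_sq_real, real_inner_smul_right, norm_smul, Real.norm_of_nonneg ht₀.le]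
      ring
    rw [← EReal.coe_add, ← EReal.coe_add, EReal.coe_le_coe_iff, hexp, dist_eq_norm] at hmin
    have hinner : ⟪x - p, y - p⟫ = -⟪p - x, y - p⟫ := by rw [← inner_neg_left, neg_sub]
    refine le_of_mul_le_mul_left ?_ ht₀
    rw [hinner]
    linarith
  have hlim : Tendsto (fun t => Fy + t * (c * ‖y - p‖ ^ 2)) (𝓝[>] 0) (𝓝 Fy) := by
    have : Continuous fun t : ℝ => Fy + t * (c * ‖y - p‖ ^ 2) := by fun_prop
    simpa using (this.tendsto 0).mono_left nhdsWithin_le_nhds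
  have := ge_of_tendsto hlim (eventually_of_mem (Ioc_mem_nhdsGT one_pos) hseg)
  rw [real_inner_smul_left, ← EReal.coe_add, EReal.coe_le_coe_iff]
  linarith

theorem IsProxPoint.add_two_mul_sq_le (hcf : ConvexFn f) (hf : ∀ y, f y ≠ ⊥)
    (hp : IsProxPoint f c x p) (hx : f x ≠ ⊤) :
    f p + ((2 * c * dist x p ^ 2 : ℝ) : EReal) ≤ f x := by
  have := (hp.smul_sub_mem_subdiff hcf hf hx).2 x
  rwa [real_inner_smul_left, real_inner_self_eq_norm_sq, ← dist_eq_norm] at this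

def IsProxSeq (f : E → EReal) (c : ℝ) (x : ℕ → E) : Prop :=
  ∀ k, IsProxPoint f c (x k) (x (k + 1))

theorem exists_isProxSeq (hlf : LowerSemicontinuous f) (hm : ∀ y, (m : EReal) ≤ f y)
    (hc : 0 < c) (x₀ : E) : ∃ x, x 0 = x₀ ∧ IsProxSeq f c x := by
  choose prox hprox using exists_isProxPoint hlf hm hc
  exact ⟨fun k => prox^[k] x₀, rfl, fun k => by
    simpa only [Function.iterate_succ_apply'] using hprox _⟩

namespace IsProxSeq

variable {x : ℕ → EuclideanSpace ℝ (Fin d)}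

theorem ne_top (hx : IsProxSeq f c x) (h0 : f (x 0) ≠ ⊤) (k : ℕ) : f (x k) ≠ ⊤ := by
  induction k with
  | zero => exact h0
  | succ k ih => exact (hx k).ne_top ih

theorem smul_sub_mem_subdiff (hcf : ConvexFn f) (hf : ∀ y, f y ≠ ⊥) (hx : IsProxSeq f c x)
    (h0 : f (x 0) ≠ ⊤) (k : ℕ) : (2 * c) • (x k - x (k + 1)) ∈ Subdiff f (x (k + 1)) :=
  (hx k).smul_sub_mem_subdiff hcf hf (hx.ne_top h0 k)

theorem slopeFn_le_dist (hcf : ConvexFn f) (hf : ∀ y, f y ≠ ⊥) (hc : 0 < c)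
    (hx : IsProxSeq f c x) (h0 : f (x 0) ≠ ⊤) (k : ℕ) :
    slopeFn f (x (k + 1)) ≤ ((2 * c * dist (x k) (x (k + 1)) : ℝ) : EReal) := by
  refine (slopeFn_le_norm (hx.smul_sub_mem_subdiff hcf hf h0 k)).trans_eq ?_
  rw [norm_smul, Real.norm_of_nonneg (by positivity), ← dist_eq_norm]

theorem add_sum_sq_dist_le (hcf : ConvexFn f) (hf : ∀ y, f y ≠ ⊥) (hx : IsProxSeq f c x)
    (h0 : f (x 0) ≠ ⊤) (N : ℕ) :
    f (x N) + ((2 * c * ∑ k ∈ Finset.range N, dist (x k) (x (k + 1)) ^ 2 : ℝ) : EReal)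
      ≤ f (x 0) := by
  induction N with
  | zero => simp
  | succ N ih =>
    refine le_trans (le_of_eq ?_) ((add_le_add_left
      ((hx N).add_two_mul_sq_le hcf hf (hx.ne_top h0 N)) _).trans ih)
    rw [add_assoc, ← EReal.coe_add, Finset.sum_range_succ]
    congr 2
    ring

theorem dist_succ_le (hcf : ConvexFn f) (hf : ∀ y, f y ≠ ⊥) (hc : 0 < c) (hx : IsProxSeq f c x)
    (h0 : f (x 0) ≠ ⊤) (k : ℕ) : dist (x (k + 1)) (x (k + 2)) ≤ dist (x k) (x (k + 1)) := by
  have hmono := inner_sub_nonneg_of_mem_subdiff hf (hx.smul_sub_mem_subdiff hcf hf h0 k)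
    (hx.smul_sub_mem_subdiff hcf hf h0 (k + 1))
  set u := x (k + 1) - x k
  set w := x (k + 2) - x (k + 1)
  have hvw : (2 * c) • (x (k + 1) - x (k + 2)) - (2 * c) • (x k - x (k + 1))
      = (2 * c) • (u - w) := by simp only [u, w]; module
  rw [hvw, real_inner_smul_left, inner_sub_left, real_inner_self_eq_norm_sq] at hmono
  have hw : ‖w‖ ^ 2 ≤ ‖u‖ * ‖w‖ := by
    have := (mul_nonneg_iff_of_pos_left (by positivity : (0 : ℝ) < 2 * c)).1 hmono
    linarith [real_inner_le_norm u w]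
  rw [dist_comm, dist_eq_norm, dist_comm (x k), dist_eq_norm]
  by_contra! hlt
  nlinarith [norm_nonneg u]

theorem sum_sq_dist_le (hcf : ConvexFn f) (hm : ∀ y, (m : EReal) ≤ f y) (hc : 0 < c)
    (hx : IsProxSeq f c x) (h0 : f (x 0) ≠ ⊤) (N : ℕ) :
    ∑ k ∈ Finset.range N, dist (x k) (x (k + 1)) ^ 2 ≤ ((f (x 0)).toReal - m) / (2 * c) := by
  have hf : ∀ y, f y ≠ ⊥ := fun y => ne_bot_of_le_ne_bot (EReal.coe_ne_bot m) (hm y)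
  have h := (add_le_add_left (hm (x N)) _).trans (hx.add_sum_sq_dist_le hcf hf h0 N)
  rw [← EReal.coe_toReal h0 (hf _), ← EReal.coe_add, EReal.coe_le_coe_iff] at h
  rw [le_div_iff₀' (by positivity)]
  linarith

theorem le_add_of_norm_le (hcf : ConvexFn f) (hf : ∀ y, f y ≠ ⊥) (hc : 0 < c)
    (hx : IsProxSeq f c x) (h0 : f (x 0) ≠ ⊤) {η : ℝ} (hη : 0 ≤ η) {w : ℕ → E}
    (hw : ∀ k, w k ∈ Subdiff g (x (k + 1)))
    (hwn : ∀ k, ‖w k‖ ≤ 2 * c * dist (x k) (x (k + 1)) + η) (y : E) (N : ℕ) :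
    g (x 1) ≤ g y + ((2 * c * ∑ k ∈ Finset.range N, dist (x k) (x (k + 1)) ^ 2
      + (2 * c * dist (x N) (x (N + 1)) + 2 * η)
        * (dist (x 1) y + ∑ k ∈ Finset.range N, dist (x k) (x (k + 1))) : ℝ) : EReal) := by
  set s : ℕ → ℝ := fun k => dist (x k) (x (k + 1))
  have hs : ∀ k, 0 ≤ s k := fun k => dist_nonneg
  have hanti : ∀ k, s (k + 1) ≤ s k := hx.dist_succ_le hcf hf hc h0
  set L := dist (x 1) y + ∑ k ∈ Finset.range N, s k
  have hsumL : ∑ k ∈ Finset.range N, s k ≤ L := le_add_of_nonneg_left dist_nonneg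
  have hdist : dist (x (N + 1)) y ≤ L :=
    calc dist (x (N + 1)) y ≤ dist (x 1) (x (N + 1)) + dist (x 1) y := dist_triangle_left _ _ _
      _ ≤ ∑ k ∈ Finset.range N, s (k + 1) + dist (x 1) y := by
          gcongr; exact dist_le_range_sum_dist (fun k => x (k + 1)) N
      _ ≤ L := by
          have := Finset.sum_le_sum fun k (_ : k ∈ Finset.range N) => hanti k
          linarith
  have hpath : ∑ k ∈ Finset.range N, ‖w k‖ * s (k + 1)
      ≤ 2 * c * ∑ k ∈ Finset.range N, s k ^ 2 + η * L :=
    calc ∑ k ∈ Finset.range N, ‖w k‖ * s (k + 1)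
        ≤ ∑ k ∈ Finset.range N, (2 * c * s k ^ 2 + η * s k) := Finset.sum_le_sum fun k _ => by
          nlinarith [mul_le_mul (hwn k) (hanti k) (hs _) (by positivity)]
      _ = 2 * c * ∑ k ∈ Finset.range N, s k ^ 2 + η * ∑ k ∈ Finset.range N, s k := by
          rw [Finset.sum_add_distrib, Finset.mul_sum, Finset.mul_sum]
      _ ≤ 2 * c * ∑ k ∈ Finset.range N, s k ^ 2 + η * L := by gcongr
  have htail : ‖w N‖ * dist (x (N + 1)) y ≤ (2 * c * s N + η) * L :=
    mul_le_mul (hwn N) hdist dist_nonneg (by positivity)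
  refine (le_add_sum_of_mem_subdiff hw y N).trans (add_le_add_right ?_ _)
  exact EReal.coe_le_coe_iff.2 (by linarith)

theorem le_of_slopeFn_le (hcf : ConvexFn f) (hm : ∀ y, (m : EReal) ≤ f y)
    (hinf : ⨅ y, g y ≤ ⨅ y, f y) (hslopes : ∀ y, slopeFn g y ≤ slopeFn f y) (hc : 0 < c)
    (hx : IsProxSeq f c x) (h0 : f (x 0) ≠ ⊤) :
    g (x 1) ≤ f (x 0) := by
  have hf : ∀ y, f y ≠ ⊥ := fun y => ne_bot_of_le_ne_bot (EReal.coe_ne_bot m) (hm y)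
  set s : ℕ → ℝ := fun k => dist (x k) (x (k + 1))
  set F₀ := (f (x 0)).toReal
  have hF₀ : (F₀ : EReal) = f (x 0) := EReal.coe_toReal h0 (hf _)
  rw [← hF₀]
  refine EReal.le_of_forall_lt_iff_le.1 fun r hr => ?_
  set ε := (r - F₀) / 3
  have hε : 0 < ε := div_pos (sub_pos.2 (EReal.coe_lt_coe_iff.1 hr)) three_pos
  obtain ⟨y, hy⟩ := exists_forall_le_add_of_iInf_le hinf
    (ne_bot_of_le_ne_bot (EReal.coe_ne_bot m) (le_iInf hm))
    (ne_top_of_le_ne_top h0 (iInf_le _ _)) hε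
  obtain ⟨N, hN⟩ := exists_mul_add_sum_lt_of_sum_sq_le (fun k => dist_nonneg)
    (hx.sum_sq_dist_le hcf hm hc h0) (dist (x 1) y) (div_pos hε (by positivity : 0 < 2 * c))
  set L := dist (x 1) y + ∑ k ∈ Finset.range N, s k
  have hL : 0 ≤ L := add_nonneg dist_nonneg (Finset.sum_nonneg fun k _ => dist_nonneg)
  set η := ε / (2 * L + 1)
  have hηL : 2 * η * L ≤ ε := by
    rw [mul_comm 2 η, mul_assoc, div_mul_eq_mul_div, div_le_iff₀ (by linarith)]
    nlinarith
  have hNL : 2 * c * s N * L ≤ ε := by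
    have := (lt_div_iff₀' (by positivity : (0 : ℝ) < 2 * c)).1 hN
    linarith
  choose w hw hwn using fun k => exists_mem_subdiff_norm_lt ((hslopes _).trans_lt
    ((hx.slopeFn_le_dist hcf hf hc h0 k).trans_lt (EReal.coe_lt_coe_iff.2
      (lt_add_of_pos_right (2 * c * s k) (div_pos hε (by linarith : 0 < 2 * L + 1))))))
  calc g (x 1) ≤ g y + ((2 * c * ∑ k ∈ Finset.range N, s k ^ 2 + (2 * c * s N + 2 * η) * L : ℝ)
        : EReal) := hx.le_add_of_norm_le hcf hf hc h0 (by positivity) hw (fun k => (hwn k).le) y N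
    _ ≤ f (x N) + ε + ((2 * c * ∑ k ∈ Finset.range N, s k ^ 2 + 2 * ε : ℝ) : EReal) :=
        add_le_add (hy (x N)) (EReal.coe_le_coe_iff.2 (by nlinarith))
    _ = f (x N) + ((2 * c * ∑ k ∈ Finset.range N, s k ^ 2 : ℝ) : EReal)
          + ((3 * ε : ℝ) : EReal) := by
        rw [add_assoc, ← EReal.coe_add, add_assoc, ← EReal.coe_add]
        congr 2
        ring
    _ ≤ F₀ + ((3 * ε : ℝ) : EReal) := by
        rw [hF₀]; gcongr; exact hx.add_sum_sq_dist_le hcf hf h0 N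
    _ = r := by rw [← EReal.coe_add]; congr 1; simp only [ε]; ring

end IsProxSeq

theorem exists_dist_lt_of_slopeFn_le (hcf : ConvexFn f) (hlf : LowerSemicontinuous f)
    (hm : ∀ y, (m : EReal) ≤ f y) (hinf : ⨅ y, g y ≤ ⨅ y, f y)
    (hslopes : ∀ y, slopeFn g y ≤ slopeFn f y) {x₀ : E} (h0 : f x₀ ≠ ⊤)
    {δ : ℝ} (hδ : 0 < δ) : ∃ x₁, g x₁ ≤ f x₀ ∧ dist x₀ x₁ < δ := by
  set K := (f x₀).toReal - m
  have hK : 0 ≤ K := sub_nonneg.2 <| EReal.coe_le_coe_iff.1 <|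
    (hm x₀).trans_eq (EReal.coe_toReal_of_coe_le (hm x₀) h0).symm
  have hc : 0 < (K + 1) / δ ^ 2 := by positivity
  obtain ⟨x, rfl, hx⟩ := exists_isProxSeq hlf hm hc x₀
  refine ⟨x 1, hx.le_of_slopeFn_le hcf hm hinf hslopes hc h0, ?_⟩
  have hsq : dist (x 0) (x 1) ^ 2 ≤ K / (2 * ((K + 1) / δ ^ 2)) := by
    simpa using hx.sum_sq_dist_le hcf hm hc h0 1
  have hlt : K / (2 * ((K + 1) / δ ^ 2)) < δ ^ 2 := by
    rw [div_lt_iff₀ (by positivity)]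
    field_simp
    nlinarith [sq_pos_of_pos hδ]
  exact lt_of_pow_lt_pow_left₀ 2 hδ.le (hsq.trans_lt hlt)

end ConvexAnalysis

theorem comparison_principle_general {d : ℕ} (f g : EuclideanSpace ℝ (Fin d) → EReal)
    (hcf : ConvexFn f) (hlf : LowerSemicontinuous f)
    (hlg : LowerSemicontinuous g)
    (hbf : ∃ m : ℝ, ∀ x, (m : EReal) ≤ f x)
    (hinf : (⨅ x, g x) ≤ ⨅ x, f x)
    (hslopes : ∀ x, slopeFn g x ≤ slopeFn f x) :
    ∀ x, g x ≤ f x := by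
  obtain ⟨m, hm⟩ := hbf
  intro x₀
  by_cases h0 : f x₀ = ⊤
  · simp [h0]
  exact (hlg.isClosed_preimage (f x₀)).closure_subset <| Metric.mem_closure_iff.2 fun δ hδ =>
    exists_dist_lt_of_slopeFn_le hcf hlf hm hinf hslopes h0 hδ

theorem comparison_principle {d : ℕ} (f g : EuclideanSpace ℝ (Fin d) → EReal)
    (hcf : ConvexFn f) (hlf : LowerSemicontinuous f)
    (hcg : ConvexFn g) (hlg : LowerSemicontinuous g)
    (hbf : ∃ m : ℝ, ∀ x, (m : EReal) ≤ f x)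
    (hbg : ∃ m : ℝ, ∀ x, (m : EReal) ≤ g x)
    (hinf : (⨅ x, g x) ≤ ⨅ x, f x)
    (hslopes : ∀ x, slopeFn g x ≤ slopeFn f x) :
    ∀ x, g x ≤ f x :=
  comparison_principle_general f g hcf hlf hlg hbf hinf hslopes
end
end

section
/- Let f_n be convex lower semicontinuous functions on ℝ^d and suppose there is a sequence (x_n, x_n*) ∈ ∂f_n with f_n(x_n) ∈ ℝ such that (x_n, x_n*, f_n(x_n)) → (x̄, x̄*, α) in ℝ^d × ℝ^d × ℝ. Then x̄* ∈ ∂f_u(x̄) ∩ ∂f_l(x̄) and α = f_l(x̄) = f_u(x̄), where f_l and f_u are the lower and upper epigraphical limits of {f_n}. -/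
open Filter Topology MeasureTheory Set Metric RealInnerProductSpace
open scoped ENNReal NNReal

noncomputable section

theorem subdiff_of_epi_limits {d : ℕ} (f : ℕ → EuclideanSpace ℝ (Fin d) → EReal)
    (hconv : ∀ n, ConvexFn (f n)) (hlsc : ∀ n, LowerSemicontinuous (f n))
    (hbot : ∀ n x, f n x ≠ ⊥)
    (x xs : ℕ → EuclideanSpace ℝ (Fin d)) (xbar xbarstar : EuclideanSpace ℝ (Fin d)) (α : ℝ)
    (hsub : ∀ n, xs n ∈ Subdiff (f n) (x n))
    (hx : Filter.Tendsto x atTop (𝓝 xbar))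
    (hxs : Filter.Tendsto xs atTop (𝓝 xbarstar))
    (hval : Filter.Tendsto (fun n => f n (x n)) atTop (𝓝 ((α : EReal)))) :
    xbarstar ∈ Subdiff (eLimsup f) xbar ∧ xbarstar ∈ Subdiff (eLiminf f) xbar ∧
      eLiminf f xbar = (α : EReal) ∧ eLimsup f xbar = (α : EReal) := by
  set a : ℕ → ℝ := fun n => (f n (x n)).toReal with ha
  have hne : ∀ n, f n (x n) = ((a n : ℝ) : EReal) := fun n =>
    (EReal.coe_toReal (hsub n).1 (hbot n (x n))).symm
  have hta : Tendsto a atTop (𝓝 α) := by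
    rw [← EReal.tendsto_coe]
    exact hval.congr fun n => hne n
  -- key lower bound
  have key : ∀ (y : EuclideanSpace ℝ (Fin d)) (u : ℕ → EuclideanSpace ℝ (Fin d)),
      Tendsto u atTop (𝓝 y) →
      ((α + ⟪xbarstar, y - xbar⟫ : ℝ) : EReal) ≤ Filter.liminf (fun n => f n (u n)) atTop := by
    intro y u hu
    have hlb : ∀ n, ((a n + ⟪xs n, u n - x n⟫ : ℝ) : EReal) ≤ f n (u n) := by
      intro n
      have h2 := (hsub n).2 (u n)
      rw [hne n] at h2
      rw [EReal.coe_add]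
      exact h2
    have hTend : Tendsto (fun n => ((a n + ⟪xs n, u n - x n⟫ : ℝ) : EReal)) atTop
        (𝓝 ((α + ⟪xbarstar, y - xbar⟫ : ℝ) : EReal)) := by
      rw [EReal.tendsto_coe]
      exact hta.add (hxs.inner (hu.sub hx))
    calc ((α + ⟪xbarstar, y - xbar⟫ : ℝ) : EReal)
        = Filter.liminf (fun n => ((a n + ⟪xs n, u n - x n⟫ : ℝ) : EReal)) atTop :=
          hTend.liminf_eq.symm
      _ ≤ Filter.liminf (fun n => f n (u n)) atTop :=
          Filter.liminf_le_liminf (Filter.Eventually.of_forall hlb)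
  have hleLiminf : ∀ y, ((α + ⟪xbarstar, y - xbar⟫ : ℝ) : EReal) ≤ eLiminf f y :=
    fun y => le_iInf₂ fun u hu => key y u hu
  have hleLimsup : ∀ y, ((α + ⟪xbarstar, y - xbar⟫ : ℝ) : EReal) ≤ eLimsup f y :=
    fun y => le_iInf₂ fun u hu => (key y u hu).trans Filter.liminf_le_limsup
  have hself : ⟪xbarstar, xbar - xbar⟫ = (0 : ℝ) := by simp
  have hlo1 : (α : EReal) ≤ eLiminf f xbar := by
    have := hleLiminf xbar; rw [hself, add_zero] at this; exact this
  have hlo2 : (α : EReal) ≤ eLimsup f xbar := by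
    have := hleLimsup xbar; rw [hself, add_zero] at this; exact this
  have hub1 : eLiminf f xbar ≤ (α : EReal) := by
    have h := iInf₂_le (f := fun (u : ℕ → EuclideanSpace ℝ (Fin d))
        (_ : Tendsto u atTop (𝓝 xbar)) => Filter.liminf (fun n => f n (u n)) atTop) x hx
    rwa [hval.liminf_eq] at h
  have hub2 : eLimsup f xbar ≤ (α : EReal) := by
    have h := iInf₂_le (f := fun (u : ℕ → EuclideanSpace ℝ (Fin d))
        (_ : Tendsto u atTop (𝓝 xbar)) => Filter.limsup (fun n => f n (u n)) atTop) x hx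
    rwa [hval.limsup_eq] at h
  have heq1 : eLiminf f xbar = (α : EReal) := le_antisymm hub1 hlo1
  have heq2 : eLimsup f xbar = (α : EReal) := le_antisymm hub2 hlo2
  refine ⟨⟨by rw [heq2]; exact EReal.coe_ne_top α, fun y => ?_⟩,
    ⟨by rw [heq1]; exact EReal.coe_ne_top α, fun y => ?_⟩, heq1, heq2⟩
  · rw [heq2, ← EReal.coe_add]; exact hleLimsup y
  · rw [heq1, ← EReal.coe_add]; exact hleLiminf y
end
end

section
/- Let f, {f_n} be proper convex lower semicontinuous functions on ℝ^d such that the slopes s_{f_n} epigraphically converge to s_f, and suppose f_u(x̄) ∈ ℝ for some x̄ ∈ dom s_f. Then s_{f_u}(x) ≤ s_f(x) for all x ∈ ℝ^d, where f_u is the upper epigraphical limit of {f_n}. -/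
open Filter Topology MeasureTheory Set Metric RealInnerProductSpace
open scoped ENNReal NNReal

noncomputable section

/-!
Take `q > s_f(x)`. Epigraphical convergence of the slopes gives points `uₙ → x` carrying
subgradients `vₙ ∈ ∂fₙ(uₙ)` with `‖vₙ‖ ≤ q`. The subgradient inequality against points
`bₙ → x̄` with `fₙ(bₙ)` bounded above bounds `fₙ(uₙ)` from above. Along a subsequence,
`fₙ(uₙ)` tends to its limsup `L ≥ f_u(x)` and `vₙ → w` with `‖w‖ ≤ q`; passing to the limit
in `fₙ(uₙ) + ⟪vₙ, tₙ - uₙ⟫ ≤ fₙ(tₙ)` for arbitrary `tₙ → y` shows `w ∈ ∂f_u(x)`.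
-/

section

variable {d : ℕ}

theorem le_add_norm_mul_norm_of_mem_subdiff {g : EuclideanSpace ℝ (Fin d) → EReal}
    {x y v : EuclideanSpace ℝ (Fin d)} (hv : v ∈ Subdiff g x) :
    g x ≤ g y + ((‖v‖ * ‖y - x‖ : ℝ) : EReal) := by
  obtain ⟨hx, hsub⟩ := hv
  rcases eq_or_ne (g x) ⊥ with hbot | hbot
  · simp [hbot]
  obtain ⟨t, ht⟩ : ∃ t : ℝ, g x = t := ⟨(g x).toReal, (EReal.coe_toReal hx hbot).symm⟩
  have hinner : -(‖v‖ * ‖y - x‖) ≤ ⟪v, y - x⟫ :=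
    neg_le_of_abs_le (abs_real_inner_le_norm v (y - x))
  rw [ht] at hsub ⊢
  calc (t : EReal) ≤ ((t + ⟪v, y - x⟫ + ‖v‖ * ‖y - x‖ : ℝ) : EReal) := by
        exact_mod_cast (by linarith)
    _ = (t : EReal) + ((⟪v, y - x⟫ : ℝ) : EReal) + ((‖v‖ * ‖y - x‖ : ℝ) : EReal) := by
        push_cast; rfl
    _ ≤ g y + ((‖v‖ * ‖y - x‖ : ℝ) : EReal) := by gcongr; exact hsub y

theorem exists_mem_subdiff_norm_lt_of_slopeFn_lt {g : EuclideanSpace ℝ (Fin d) → EReal}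
    {x : EuclideanSpace ℝ (Fin d)} {q : ℝ} (h : slopeFn g x < q) :
    ∃ v ∈ Subdiff g x, ‖v‖ < q := by
  obtain ⟨_, ⟨v, hv, rfl⟩, hlt⟩ := sInf_lt_iff.1 h
  exact ⟨v, hv, EReal.coe_lt_coe_iff.1 hlt⟩

theorem exists_eventually_mem_subdiff_of_eventually_slopeFn_lt
    {φ : ℕ → EuclideanSpace ℝ (Fin d) → EReal} {u : ℕ → EuclideanSpace ℝ (Fin d)} {q : ℝ}
    (h : ∀ᶠ n in atTop, slopeFn (φ n) (u n) < q) :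
    ∃ V : ℕ → EuclideanSpace ℝ (Fin d), ∀ᶠ n in atTop, V n ∈ Subdiff (φ n) (u n) ∧ ‖V n‖ ≤ q := by
  have hex : ∀ n, ∃ v, slopeFn (φ n) (u n) < q → v ∈ Subdiff (φ n) (u n) ∧ ‖v‖ ≤ q := by
    intro n
    by_cases hn : slopeFn (φ n) (u n) < q
    · obtain ⟨v, hv, hlt⟩ := exists_mem_subdiff_norm_lt_of_slopeFn_lt hn
      exact ⟨v, fun _ => ⟨hv, hlt.le⟩⟩
    · exact ⟨0, fun hn' => absurd hn' hn⟩
  choose V hV using hex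
  exact ⟨V, h.mono hV⟩

theorem eLimsup_le_limsup {φ : ℕ → EuclideanSpace ℝ (Fin d) → EReal}
    {u : ℕ → EuclideanSpace ℝ (Fin d)} {x : EuclideanSpace ℝ (Fin d)}
    (hu : Tendsto u atTop (𝓝 x)) :
    eLimsup φ x ≤ limsup (fun n => φ n (u n)) atTop :=
  iInf₂_le u hu

theorem exists_tendsto_eventually_lt_of_eLimsup_lt {φ : ℕ → EuclideanSpace ℝ (Fin d) → EReal}
    {x : EuclideanSpace ℝ (Fin d)} {c : EReal} (h : eLimsup φ x < c) :
    ∃ u, Tendsto u atTop (𝓝 x) ∧ ∀ᶠ n in atTop, φ n (u n) < c := by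
  simp only [eLimsup, iInf_lt_iff] at h
  obtain ⟨u, hu, hlt⟩ := h
  exact ⟨u, hu, eventually_lt_of_limsup_lt hlt⟩

theorem eLimsup_comp_le {φ : ℕ → EuclideanSpace ℝ (Fin d) → EReal} {σ : ℕ → ℕ}
    (hσ : Tendsto σ atTop atTop) (y : EuclideanSpace ℝ (Fin d)) :
    eLimsup (fun k => φ (σ k)) y ≤ eLimsup φ y :=
  le_iInf₂ fun t ht =>
    (eLimsup_le_limsup (ht.comp hσ)).trans (hσ.limsup_comp_le_limsup (u := fun n => φ n (t n)))

theorem add_inner_le_eLimsup_of_mem_subdiff {φ : ℕ → EuclideanSpace ℝ (Fin d) → EReal}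
    {u V : ℕ → EuclideanSpace ℝ (Fin d)} {x w : EuclideanSpace ℝ (Fin d)} {L : EReal}
    (hu : Tendsto u atTop (𝓝 x)) (hV : Tendsto V atTop (𝓝 w))
    (hL : Tendsto (fun n => φ n (u n)) atTop (𝓝 L))
    (hsub : ∀ᶠ n in atTop, V n ∈ Subdiff (φ n) (u n)) (y : EuclideanSpace ℝ (Fin d)) :
    L + ((⟪w, y - x⟫ : ℝ) : EReal) ≤ eLimsup φ y := by
  refine le_iInf₂ fun t ht => ?_
  have hsum : Tendsto (fun n => φ n (u n) + ((⟪V n, t n - u n⟫ : ℝ) : EReal)) atTop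
      (𝓝 (L + ((⟪w, y - x⟫ : ℝ) : EReal))) :=
    (EReal.continuousAt_add (Or.inr (EReal.coe_ne_bot _)) (Or.inr (EReal.coe_ne_top _))).tendsto.comp
      (hL.prodMk_nhds (EReal.tendsto_coe.2 (hV.inner (ht.sub hu))))
  rw [← hsum.limsup_eq]
  exact limsup_le_limsup (hsub.mono fun n hn => hn.2 (t n))

theorem exists_mem_subdiff_eLimsup {φ : ℕ → EuclideanSpace ℝ (Fin d) → EReal}
    {u V : ℕ → EuclideanSpace ℝ (Fin d)} {x : EuclideanSpace ℝ (Fin d)} {q M : ℝ}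
    (hu : Tendsto u atTop (𝓝 x))
    (hV : ∀ᶠ n in atTop, V n ∈ Subdiff (φ n) (u n) ∧ ‖V n‖ ≤ q)
    (hbdd : ∀ᶠ n in atTop, φ n (u n) ≤ M) :
    ∃ w, ‖w‖ ≤ q ∧ w ∈ Subdiff (eLimsup φ) x := by
  set L := limsup (fun n => φ n (u n)) atTop
  obtain ⟨σ, hσ, hσL⟩ :=
    (isGreatest_mapClusterPt_limsup (u := fun n => φ n (u n)) (f := atTop)).1.tendsto_subseq
  have hball : ∃ᶠ k in atTop, V (σ k) ∈ closedBall 0 q :=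
    (hσ.tendsto_atTop.eventually hV).frequently.mono fun _ hk => mem_closedBall_zero_iff.2 hk.2
  obtain ⟨w, hw, τ, hτ, hVw⟩ := (isCompact_closedBall 0 q).tendsto_subseq' hball
  have hρ : Tendsto (σ ∘ τ) atTop atTop := (hσ.comp hτ).tendsto_atTop
  have hxL : eLimsup φ x ≤ L := eLimsup_le_limsup hu
  have hLM : L ≤ M := limsup_le_of_le (by isBoundedDefault) hbdd
  refine ⟨w, mem_closedBall_zero_iff.1 hw, ((hxL.trans hLM).trans_lt (EReal.coe_lt_top M)).ne,
    fun y => ?_⟩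
  calc eLimsup φ x + ((⟪w, y - x⟫ : ℝ) : EReal) ≤ L + ((⟪w, y - x⟫ : ℝ) : EReal) := by gcongr
    _ ≤ eLimsup (fun k => φ (σ (τ k))) y :=
        add_inner_le_eLimsup_of_mem_subdiff (hu.comp hρ) hVw (hσL.comp hτ.tendsto_atTop)
          (hρ.eventually (hV.mono fun _ h => h.1)) y
    _ ≤ eLimsup φ y := eLimsup_comp_le hρ y

theorem exists_eventually_le_of_mem_subdiff {φ : ℕ → EuclideanSpace ℝ (Fin d) → EReal}
    {u b V : ℕ → EuclideanSpace ℝ (Fin d)} {x z : EuclideanSpace ℝ (Fin d)} {q C : ℝ}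
    (hu : Tendsto u atTop (𝓝 x)) (hb : Tendsto b atTop (𝓝 z))
    (hV : ∀ᶠ n in atTop, V n ∈ Subdiff (φ n) (u n) ∧ ‖V n‖ ≤ q)
    (hC : ∀ᶠ n in atTop, φ n (b n) < C) :
    ∃ M : ℝ, ∀ᶠ n in atTop, φ n (u n) ≤ M := by
  refine ⟨C + q * (‖z - x‖ + 1), ?_⟩
  have hdist : ∀ᶠ n in atTop, ‖b n - u n‖ < ‖z - x‖ + 1 :=
    (hb.sub hu).norm.eventually (gt_mem_nhds (lt_add_one _))
  filter_upwards [hV, hC, hdist] with n ⟨hsub, hnorm⟩ hbn hd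
  have hprod : ‖V n‖ * ‖b n - u n‖ ≤ q * (‖z - x‖ + 1) :=
    mul_le_mul hnorm hd.le (norm_nonneg _) ((norm_nonneg _).trans hnorm)
  calc φ n (u n) ≤ φ n (b n) + ((‖V n‖ * ‖b n - u n‖ : ℝ) : EReal) :=
        le_add_norm_mul_norm_of_mem_subdiff hsub
    _ ≤ (C : EReal) + ((q * (‖z - x‖ + 1) : ℝ) : EReal) :=
        add_le_add hbn.le (EReal.coe_le_coe_iff.2 hprod)
    _ = ((C + q * (‖z - x‖ + 1) : ℝ) : EReal) := (EReal.coe_add _ _).symm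

end

theorem slope_of_upper_limit_le_general {d : ℕ} (f : EuclideanSpace ℝ (Fin d) → EReal) (fs : ℕ → EuclideanSpace ℝ (Fin d) → EReal)
    (hepi : EpiConv (fun n => slopeFn (fs n)) (slopeFn f))
    (xbar : EuclideanSpace ℝ (Fin d))
    (hreal : eLimsup fs xbar ≠ ⊤ ∧ eLimsup fs xbar ≠ ⊥) :
    ∀ x, slopeFn (eLimsup fs) x ≤ slopeFn f x := by
  intro x
  refine EReal.le_of_forall_lt_iff_le.1 fun q hq => ?_
  obtain ⟨u, hu, hslope⟩ := exists_tendsto_eventually_lt_of_eLimsup_lt ((hepi x).1.trans_lt hq)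
  obtain ⟨V, hV⟩ := exists_eventually_mem_subdiff_of_eventually_slopeFn_lt hslope
  obtain ⟨C, hC, -⟩ := EReal.exists_between_coe_real hreal.1.lt_top
  obtain ⟨b, hb, hbC⟩ := exists_tendsto_eventually_lt_of_eLimsup_lt hC
  obtain ⟨M, hM⟩ := exists_eventually_le_of_mem_subdiff hu hb hV hbC
  obtain ⟨w, hw, hsub⟩ := exists_mem_subdiff_eLimsup hu hV hM
  exact (sInf_le (mem_image_of_mem _ hsub)).trans (by exact_mod_cast hw)

theorem slope_of_upper_limit_le {d : ℕ} (f : EuclideanSpace ℝ (Fin d) → EReal) (fs : ℕ → EuclideanSpace ℝ (Fin d) → EReal)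
    (hpf : Proper f) (hcf : ConvexFn f) (hlf : LowerSemicontinuous f)
    (hps : ∀ n, Proper (fs n)) (hcs : ∀ n, ConvexFn (fs n))
    (hls : ∀ n, LowerSemicontinuous (fs n))
    (hepi : EpiConv (fun n => slopeFn (fs n)) (slopeFn f))
    (xbar : EuclideanSpace ℝ (Fin d)) (hxbar : xbar ∈ domSub f)
    (hreal : eLimsup fs xbar ≠ ⊤ ∧ eLimsup fs xbar ≠ ⊥) :
    ∀ x, slopeFn (eLimsup fs) x ≤ slopeFn f x :=
  slope_of_upper_limit_le_general f fs hepi xbar hreal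
end
end
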